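/- arXiv:2211.01510 — 6 statements merged into one kernel-verified Lean document; each statement's English description precedes it below -/
import Mathlib

section
/- Let F be a field of characteristic p > 0. Then F is locally embeddable into finite fields of characteristic p: for every finite subset K ⊆ F there exist a finite field E of characteristic p and a local embedding of K into E. In particular, F is locally embeddable into the class of matrix algebras over 𝔽_p: for every finite subset K ⊆ F there exist d ≥ 1 and a local embedding of K into M_d(ZMod p). -/
/-!
The subring `A` of `F` generated by `K` is a finitely generated `𝔽_p`-algebra and a domain,
hence a Jacobson ring: its nilradical, which is `0`, is the intersection of its maximal ideals.
So the product of the differences of distinct elements of `K`, being nonzero, lies outside some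
maximal ideal `m`, and the quotient map `A → A ⧸ m` is injective on `K`. By the Nullstellensatz
`A ⧸ m` is finite over `𝔽_p`, so it is a finite field, and the regular representation embeds it
into `M_d(𝔽_p)` with `d = [A ⧸ m : 𝔽_p]`.
-/

/-- `f` is a local embedding of the finite subset `K` of the ring `R` into the ring `S`:
it preserves addition, multiplication and the identity insofar as this makes sense
within `K`, and is injective on `K`. -/
def IsLocalEmbeddingOn (R S : Type*) [Ring R] [Ring S] (K : Set R) (f : R → S) : Prop :=
  (∀ x ∈ K, ∀ y ∈ K, x + y ∈ K → f (x + y) = f x + f y) ∧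
  (∀ x ∈ K, ∀ y ∈ K, x * y ∈ K → f (x * y) = f x * f y) ∧
  ((1 : R) ∈ K → f 1 = 1) ∧
  Set.InjOn f K

/-- A local embedding of a finite subset of a field `F` of characteristic `p`
into a finite field `E` of characteristic `p`. -/
structure FiniteFieldLocalEmbedding (F : Type*) [Field F] (p : ℕ) (K : Set F) where
  E : Type
  [fieldE : Field E]
  [finE : Finite E]
  charE : CharP E p
  f : F → E
  emb : IsLocalEmbeddingOn F E K f

universe u

theorem IsLocalEmbeddingOn.comp {R S S' : Type*} [Ring R] [Ring S] [Ring S'] {K : Set R}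
    {f : R → S} (h : IsLocalEmbeddingOn R S K f) (g : S →+* S') (hg : Function.Injective g) :
    IsLocalEmbeddingOn R S' K (g ∘ f) := by
  obtain ⟨hadd, hmul, hone, hinj⟩ := h
  refine ⟨fun x hx y hy hxy => ?_, fun x hx y hy hxy => ?_, fun h1 => ?_, hg.comp_injOn hinj⟩
  · simp [hadd x hx y hy hxy]
  · simp [hmul x hx y hy hxy]
  · simp [hone h1]

theorem IsLocalEmbeddingOn.extend_subtypeVal {R S σ : Type*} [Ring R] [Ring S] [SetLike σ R]
    [SubringClass σ R] {A : σ} {K : Set R} (hKA : K ⊆ A) (φ : A →+* S)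
    (hφ : Set.InjOn φ (Subtype.val ⁻¹' K)) :
    IsLocalEmbeddingOn R S K (Function.extend Subtype.val φ 0) := by
  have hext (x : R) (hx : x ∈ A) : Function.extend Subtype.val φ 0 x = φ ⟨x, hx⟩ :=
    Subtype.val_injective.extend_apply φ 0 ⟨x, hx⟩
  refine ⟨fun x hx y hy _ => ?_, fun x hx y hy _ => ?_, fun _ => ?_, fun x hx y hy hxy => ?_⟩
  · rw [hext _ (add_mem (hKA hx) (hKA hy)), hext x (hKA hx), hext y (hKA hy), ← map_add]
    rfl
  · rw [hext _ (mul_mem (hKA hx) (hKA hy)), hext x (hKA hx), hext y (hKA hy), ← map_mul]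
    rfl
  · rw [hext 1 (one_mem A)]
    exact map_one φ
  · rw [hext x (hKA hx), hext y (hKA hy)] at hxy
    exact congrArg Subtype.val (@hφ ⟨x, hKA hx⟩ hx ⟨y, hKA hy⟩ hy hxy)

section Jacobson

variable {A : Type*} [CommRing A] [IsJacobsonRing A]

theorem exists_isMaximal_notMem_of_not_isNilpotent {s : A} (hs : ¬IsNilpotent s) :
    ∃ m : Ideal A, m.IsMaximal ∧ s ∉ m := by
  by_contra! h
  refine hs (mem_nilradical.mp ?_)
  rw [nilradical, Ideal.radical_eq_jacobson, Ideal.jacobson, Ideal.mem_sInf]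
  exact fun m hm => h m hm.2

variable [IsDomain A]

theorem exists_isMaximal_forall_notMem {t : Set A} (ht : t.Finite) (h0 : (0 : A) ∉ t) :
    ∃ m : Ideal A, m.IsMaximal ∧ ∀ a ∈ t, a ∉ m := by
  classical
  have hprod : ∏ a ∈ ht.toFinset, a ≠ 0 :=
    Finset.prod_ne_zero_iff.mpr fun a ha h => h0 (h ▸ ht.mem_toFinset.mp ha)
  obtain ⟨m, hm, hprod_notMem⟩ :=
    exists_isMaximal_notMem_of_not_isNilpotent fun h => hprod h.eq_zero
  exact ⟨m, hm, fun a ha ham =>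
    hprod_notMem (Ideal.mem_of_dvd _ (Finset.dvd_prod_of_mem _ (ht.mem_toFinset.mpr ha)) ham)⟩

theorem exists_isMaximal_injOn_mk {s : Set A} (hs : s.Finite) :
    ∃ m : Ideal A, m.IsMaximal ∧ Set.InjOn (Ideal.Quotient.mk m) s := by
  obtain ⟨m, hm, hnotMem⟩ := exists_isMaximal_forall_notMem
    (hs.offDiag.image fun q : A × A => q.1 - q.2)
    (by rintro ⟨⟨x, y⟩, ⟨-, -, hxy⟩, h⟩; exact hxy (sub_eq_zero.mp h))
  refine ⟨m, hm, fun x hx y hy hxy => ?_⟩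
  by_contra hne
  exact hnotMem (x - y) ⟨(x, y), ⟨hx, hy, hne⟩, rfl⟩ (Ideal.Quotient.eq.mp hxy)

end Jacobson

theorem finite_quotient_of_isMaximal (k : Type*) {A : Type*} [Field k] [Finite k] [CommRing A]
    [Algebra k A] [Algebra.FiniteType k A] (m : Ideal A) [m.IsMaximal] : Finite (A ⧸ m) := by
  let := Ideal.Quotient.field m
  have : Algebra.FiniteType k (A ⧸ m) :=
    .of_surjective (Ideal.Quotient.mkₐ k m) (Ideal.Quotient.mkₐ_surjective k m)
  have := finite_of_finite_type_of_isJacobsonRing k (A ⧸ m)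
  exact Module.finite_of_finite k

theorem exists_finite_field_isLocalEmbeddingOn (k : Type*) {F : Type u} [Field k] [Finite k]
    [CommRing F] [IsDomain F] [Algebra k F] {K : Set F} (hK : K.Finite) :
    ∃ (E : Type u) (_ : Field E) (_ : Finite E) (_ : Algebra k E) (f : F → E),
      IsLocalEmbeddingOn F E K f := by
  let A := Algebra.adjoin k K
  have : Algebra.FiniteType k A := by
    change Algebra.FiniteType k (Algebra.adjoin k K)
    rw [← Subalgebra.fg_iff_finiteType, ← hK.coe_toFinset]
    exact Subalgebra.fg_adjoin_finset _
  have : IsJacobsonRing A := isJacobsonRing_of_finiteType (A := k)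
  have hK' : (Subtype.val ⁻¹' K : Set A).Finite := hK.preimage Subtype.val_injective.injOn
  obtain ⟨m, hm, hinj⟩ := exists_isMaximal_injOn_mk hK'
  exact ⟨A ⧸ m, Ideal.Quotient.field m, finite_quotient_of_isMaximal k m, inferInstance, _,
    .extend_subtypeVal Algebra.subset_adjoin (Ideal.Quotient.mk m) hinj⟩

noncomputable def FiniteFieldLocalEmbedding.ofFinite {F : Type*} [Field F] {p : ℕ} {K : Set F}
    {E : Type*} [Field E] [Finite E] [CharP E p] {f : F → E} (hf : IsLocalEmbeddingOn F E K f) :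
    FiniteFieldLocalEmbedding F p K :=
  let μ : E ≃+* Shrink.{0} E := (Shrink.ringEquiv.{0} E).symm
  { E := Shrink.{0} E
    charE := charP_of_injective_ringHom (f := μ.toRingHom) μ.injective p
    f := μ ∘ f
    emb := hf.comp μ.toRingHom μ.injective }

theorem exists_injective_ringHom_matrix (k E : Type*) [Field k] [Ring E] [Nontrivial E]
    [Algebra k E] [Module.Finite k E] :
    ∃ d, 1 ≤ d ∧ ∃ g : E →+* Matrix (Fin d) (Fin d) k, Function.Injective g :=
  ⟨_, Module.finrank_pos, ((LinearMap.toMatrixAlgEquiv (Module.finBasis k E)).toRingHom).comp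
      (Algebra.lmul k E).toRingHom,
    (LinearMap.toMatrixAlgEquiv _).injective.comp Algebra.lmul_injective⟩

theorem FiniteFieldLocalEmbedding.exists_matrix {F : Type*} [Field F] {p : ℕ} [Fact p.Prime]
    {K : Set F} (e : FiniteFieldLocalEmbedding F p K) :
    ∃ d : ℕ, 1 ≤ d ∧ ∃ f : F → Matrix (Fin d) (Fin d) (ZMod p),
      IsLocalEmbeddingOn F (Matrix (Fin d) (Fin d) (ZMod p)) K f := by
  let := e.fieldE
  have := e.finE
  have := e.charE
  let := ZMod.algebra e.E p
  have : Module.Finite (ZMod p) e.E := .of_finite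
  obtain ⟨d, hd, g, hg⟩ := exists_injective_ringHom_matrix (ZMod p) e.E
  exact ⟨d, hd, g ∘ e.f, e.emb.comp g hg⟩

/-- A field of characteristic `p > 0` is locally embeddable into finite fields of
characteristic `p`, and in particular into matrix algebras over `𝔽_p`. -/
theorem field_locally_embeds_into_finite_fields (F : Type*) [Field F]
    (p : ℕ) (hp : p.Prime) [CharP F p] (K : Set F) (hK : K.Finite) :
    Nonempty (FiniteFieldLocalEmbedding F p K) ∧
    ∃ d : ℕ, 1 ≤ d ∧ ∃ f : F → Matrix (Fin d) (Fin d) (ZMod p),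
      IsLocalEmbeddingOn F (Matrix (Fin d) (Fin d) (ZMod p)) K f := by
  have : Fact p.Prime := ⟨hp⟩
  let := ZMod.algebra F p
  obtain ⟨E, _, _, _, f, hf⟩ := exists_finite_field_isLocalEmbeddingOn (ZMod p) hK
  have : CharP E p := charP_of_injective_algebraMap' (ZMod p) p
  let e : FiniteFieldLocalEmbedding F p K := .ofFinite hf
  exact ⟨⟨e⟩, e.exists_matrix⟩
end

section
/- Let Γ be a group, let p be a prime, and let F be a field of characteristic p. Then the group ring F[Γ] is stably finite if and only if the group ring 𝔽_p[Γ] is stably finite, where 𝔽_p = ZMod p. -/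
/-- A group is Hopfian if every surjective endomorphism is injective. -/
def IsHopfian (G : Type*) [Group G] : Prop :=
  ∀ φ : G →* G, Function.Surjective φ → Function.Injective φ

/-- A unital ring is directly finite if `x * y = 1` implies `y * x = 1`. -/
def DirectlyFinite (R : Type*) [Ring R] : Prop :=
  ∀ x y : R, x * y = 1 → y * x = 1

/-- The action of `Γ` on the base group `Γ →₀ A` of the wreath product,
given by `(g • f) x = f (g⁻¹ * x)`. -/
noncomputable def wreathAction (A : Type*) [AddCommGroup A] (Γ : Type*) [Group Γ] :
    Γ →* MulAut (Multiplicative (Γ →₀ A)) where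
  toFun g := AddEquiv.toMultiplicative (Finsupp.domCongr (Equiv.mulLeft g))
  map_one' := by
    apply MulEquiv.ext
    intro f
    apply Multiplicative.toAdd.injective
    apply Finsupp.ext
    intro x
    simp [Finsupp.domCongr_apply]
    rfl
  map_mul' g₁ g₂ := by
    apply MulEquiv.ext
    intro f
    apply Multiplicative.toAdd.injective
    apply Finsupp.ext
    intro x
    simp [Finsupp.domCongr_apply, mul_assoc]
    rfl

/-- The (restricted) wreath product `A ≀ Γ`: the semidirect product of the group
`Γ →₀ A` of finitely supported functions `Γ → A` (pointwise addition) by `Γ`,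
acting by `(g • f) x = f (g⁻¹ * x)`. -/
abbrev WreathProduct (A : Type*) [AddCommGroup A] (Γ : Type*) [Group Γ] : Type _ :=
  SemidirectProduct (Multiplicative (Γ →₀ A)) Γ (wreathAction A Γ)

/-- The base group `Γ →₀ A` of the wreath product, as a subgroup of `A ≀ Γ`. -/
noncomputable def WreathProduct.base (A : Type*) [AddCommGroup A] (Γ : Type*) [Group Γ] :
    Subgroup (WreathProduct A Γ) :=
  (SemidirectProduct.inl : Multiplicative (Γ →₀ A) →* WreathProduct A Γ).range

/-- A unital ring is stably finite if all its matrix rings are directly finite. -/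
def StablyFinite (R : Type*) [Ring R] : Prop :=
  ∀ d : ℕ, 1 ≤ d → DirectlyFinite (Matrix (Fin d) (Fin d) R)

/-!
Stable finiteness of `R[Γ]` passes down along injective ring maps of coefficients, which gives
one direction. Conversely, a relation `XY = 1` in `M_d(F[Γ])` involves only finitely many
coefficients, so it already holds over a finitely generated `𝔽_p`-subalgebra `A` of `F`.
Being a reduced Jacobson ring, `A` embeds into the product of its residue fields `A/𝔪`, each
finite over `𝔽_p` by Zariski's lemma. For such a field `K`, the regular representation
`K ↪ M_n(𝔽_p)` embeds `K[Γ]` into `M_n(𝔽_p)[Γ] ↪ M_n(𝔽_p[Γ])`, which is stably finite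
whenever `𝔽_p[Γ]` is.
-/

open Function

theorem stablyFinite_iff_isStablyFiniteRing (R : Type*) [Ring R] :
    StablyFinite R ↔ IsStablyFiniteRing R := by
  refine ⟨fun h => ⟨fun n => ?_⟩, fun h d _ _ _ => mul_eq_one_symm⟩
  rcases n with _ | n
  · exact ⟨fun _ => Subsingleton.elim _ _⟩
  · exact ⟨h _ n.succ_pos _ _⟩

instance Pi.isDedekindFiniteMonoid {ι : Type*} {M : ι → Type*} [∀ i, Monoid (M i)]
    [∀ i, IsDedekindFiniteMonoid (M i)] : IsDedekindFiniteMonoid (∀ i, M i) :=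
  ⟨fun h => funext fun i => mul_eq_one_symm (congrFun h i)⟩

instance Pi.isStablyFiniteRing {ι : Type*} {R : ι → Type*} [∀ i, Semiring (R i)]
    [∀ i, IsStablyFiniteRing (R i)] : IsStablyFiniteRing (∀ i, R i) :=
  ⟨fun _ => .of_injective _ (Matrix.piRingEquiv (β := R)).injective⟩

theorem injective_pi_quotient_mk_of_isJacobsonRing {A : Type*} [CommRing A] [IsJacobsonRing A]
    [IsReduced A] :
    Injective (RingHom.pi fun m : {m : Ideal A // m.IsMaximal} => Ideal.Quotient.mk m.1) := by
  rw [RingHom.injective_iff_ker_eq_bot, Ideal.ker_Pi_Quotient_mk, eq_bot_iff,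
    ← IsJacobsonRing.out ‹_› Ideal.isRadical_bot]
  exact fun x hx => Ideal.mem_sInf.2 fun m hm => (Submodule.mem_iInf _).1 hx ⟨m, hm.2⟩

namespace MonoidAlgebra

variable {Γ : Type*} [Monoid Γ]

theorem isStablyFiniteRing_of_injective {R S : Type*} [Semiring R] [Semiring S] (f : R →+* S)
    (hf : Injective f) [IsStablyFiniteRing S[Γ]] : IsStablyFiniteRing R[Γ] :=
  .of_injective (mapRingHom Γ f) (map_injective _ hf)

theorem isStablyFiniteRing_of_injective_pi {ι R : Type*} {S : ι → Type*} [Semiring R]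
    [∀ i, Semiring (S i)] (f : ∀ i, R →+* S i) (hf : Injective (RingHom.pi f))
    [∀ i, IsStablyFiniteRing (S i)[Γ]] : IsStablyFiniteRing R[Γ] := by
  refine .of_injective (RingHom.pi fun i => mapRingHom Γ (f i)) fun x y hxy => ?_
  ext g
  refine hf (funext fun i => ?_)
  simpa using congr(($hxy i).coeff g)

section Matrix

variable (n R : Type*) [Fintype n] [DecidableEq n] [Semiring R]

noncomputable def toMatrixRingHom : (Matrix n n R)[Γ] →+* Matrix n n R[Γ] :=
  liftNCRingHom (singleOneRingHom (R := R) (M := Γ)).mapMatrix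
    ((Matrix.scalar n).toMonoidHom.comp (of R Γ)) fun M g => by
      ext i j
      simp [Matrix.mul_diagonal, Matrix.diagonal_mul, single_mul_single]

variable {n R}

@[simp]
theorem coeff_toMatrixRingHom_apply (x : (Matrix n n R)[Γ]) (i j : n) (g : Γ) :
    (toMatrixRingHom n R x i j).coeff g = x.coeff g i j := by
  induction x using MonoidAlgebra.induction_linear with
  | zero => simp
  | add x y hx hy => simp [hx, hy]
  | single a M =>
    classical
    simp [toMatrixRingHom, liftNCRingHom, Matrix.mul_diagonal, coeff_single, Finsupp.single_apply,
      apply_ite (fun M : Matrix n n R => M i j)]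

theorem toMatrixRingHom_injective : Injective (toMatrixRingHom (Γ := Γ) n R) := fun x y hxy => by
  ext g i j
  simpa using congr(($hxy i j).coeff g)

instance isStablyFiniteRing_matrix [IsStablyFiniteRing R[Γ]] :
    IsStablyFiniteRing (Matrix n n R)[Γ] :=
  .of_injective _ toMatrixRingHom_injective

end Matrix

theorem isStablyFiniteRing_of_finite (k K : Type*) [CommSemiring k] [Semiring K] [Algebra k K]
    [Module.Free k K] [Module.Finite k K] [IsStablyFiniteRing k[Γ]] :
    IsStablyFiniteRing K[Γ] := by
  classical
  exact isStablyFiniteRing_of_injective _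
    (Algebra.leftMulMatrix_injective (Module.Free.chooseBasis k K))

theorem isStablyFiniteRing_of_finiteType (k A : Type*) [Field k] [CommRing A] [IsReduced A]
    [Algebra k A] [Algebra.FiniteType k A] [IsStablyFiniteRing k[Γ]] :
    IsStablyFiniteRing A[Γ] := by
  have : IsJacobsonRing A := isJacobsonRing_of_finiteType (A := k)
  have (m : {m : Ideal A // m.IsMaximal}) : IsStablyFiniteRing (A ⧸ m.1)[Γ] := by
    have := m.2
    let := Ideal.Quotient.field m.1
    have : Module.Finite k (A ⧸ m.1) := finite_of_finite_type_of_isJacobsonRing k _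
    exact isStablyFiniteRing_of_finite k _
  exact isStablyFiniteRing_of_injective_pi _ injective_pi_quotient_mk_of_isJacobsonRing

theorem mem_range_mapMatrix_of_frange_subset {k R m : Type*} [CommSemiring k] [CommSemiring R]
    [Algebra k R] [Fintype m] [DecidableEq m] (S : Subalgebra k R) (X : Matrix m m R[Γ])
    (hX : ∀ i j, ((X i j).coeff.frange : Set R) ⊆ S) :
    X ∈ Set.range (mapRingHom Γ S.val.toRingHom).mapMatrix := by
  have hcoeff (i j : m) : X i j ∈ Set.range (mapRingHom Γ S.val.toRingHom) := by
    rw [coe_mapRingHom, range_map]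
    intro g
    by_cases hg : (X i j).coeff g = 0
    · exact ⟨0, by simp [hg]⟩
    · exact ⟨⟨_, hX i j (Finsupp.mem_frange.2 ⟨hg, g, rfl⟩)⟩, rfl⟩
  choose X' hX' using hcoeff
  exact ⟨Matrix.of X', by ext i j : 1; exact hX' i j⟩

theorem isStablyFiniteRing_of_forall_adjoin (k R : Type*) [CommSemiring k] [CommSemiring R]
    [Algebra k R] (h : ∀ s : Finset R, IsStablyFiniteRing (Algebra.adjoin k (s : Set R))[Γ]) :
    IsStablyFiniteRing R[Γ] := by
  classical
  refine ⟨fun n => ⟨fun {X Y} hXY => ?_⟩⟩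
  let coeffs (ij : Fin n × Fin n) : Finset R :=
    (X ij.1 ij.2).coeff.frange ∪ (Y ij.1 ij.2).coeff.frange
  let s : Finset R := Finset.univ.biUnion coeffs
  have hs (i j : Fin n) : coeffs (i, j) ⊆ s := Finset.subset_biUnion_of_mem coeffs (by simp)
  let A := Algebra.adjoin k (s : Set R)
  let φ := (mapRingHom Γ A.val.toRingHom).mapMatrix (m := Fin n)
  have hφ : Injective φ := Matrix.map_injective (map_injective _ Subtype.val_injective)
  obtain ⟨X', hX'⟩ := mem_range_mapMatrix_of_frange_subset A X fun i j =>
    (Finset.coe_subset.2 (Finset.subset_union_left.trans (hs i j))).trans Algebra.subset_adjoin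
  obtain ⟨Y', hY'⟩ := mem_range_mapMatrix_of_frange_subset A Y fun i j =>
    (Finset.coe_subset.2 (Finset.subset_union_right.trans (hs i j))).trans Algebra.subset_adjoin
  have := h s
  have : X' * Y' = 1 := hφ (by rw [map_mul, map_one, hX', hY', hXY])
  rw [← hX', ← hY', ← map_mul, mul_eq_one_symm this, map_one]

theorem isStablyFiniteRing_of_isReduced (k R : Type*) [Field k] [CommRing R] [IsReduced R]
    [Algebra k R] [IsStablyFiniteRing k[Γ]] : IsStablyFiniteRing R[Γ] :=
  isStablyFiniteRing_of_forall_adjoin k R fun s =>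
    have : Algebra.FiniteType k (Algebra.adjoin k (s : Set R)) :=
      (Subalgebra.fg_iff_finiteType _).1 (Subalgebra.fg_adjoin_finset s)
    have : IsReduced (Algebra.adjoin k (s : Set R)) :=
      isReduced_of_injective (Subalgebra.val _) Subtype.val_injective
    isStablyFiniteRing_of_finiteType k _

end MonoidAlgebra

/-- Let `Γ` be a group, `p` a prime and `F` a field of characteristic `p`.
Then `F[Γ]` is stably finite iff `𝔽_p[Γ]` is stably finite. -/
theorem stablyFinite_groupRing_iff_stablyFinite_Fp (Γ : Type*) [Group Γ]
    (p : ℕ) (hp : p.Prime) (F : Type*) [Field F] [CharP F p] :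
    StablyFinite (MonoidAlgebra F Γ) ↔ StablyFinite (MonoidAlgebra (ZMod p) Γ) := by
  have := Fact.mk hp
  let := ZMod.algebra F p
  rw [stablyFinite_iff_isStablyFiniteRing, stablyFinite_iff_isStablyFiniteRing]
  constructor
  · intro _
    exact MonoidAlgebra.isStablyFiniteRing_of_injective _ (algebraMap (ZMod p) F).injective
  · intro _
    exact MonoidAlgebra.isStablyFiniteRing_of_isReduced (ZMod p) F
end

section
/- Let A be a nontrivial abelian group and let Γ be a finitely generated infinite group. Then every surjective group homomorphism φ : A ≀ Γ → A ≀ Γ is basic, i.e. φ maps the base group Γ →₀ A into the base group Γ →₀ A. -/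
/-!
The image `N = φ(base)` is a normal abelian subgroup of `A ≀ Γ`. For `w ∈ N` with
`Γ`-component `k ≠ 1`, the commutators `[inl b, w]` lie in `N`, and their commuting with `w` and
its conjugates forces `k² = 1`, `2A = 0`, `k` central, and the base part of `w` to be
`k`-invariant. So the projection `K` of `N` to `Γ` is central of exponent 2, hence `Γ ⧸ K` is
infinite, and base parts of elements of `N` have zero sum over every `K`-coset (the points `z`,
`kz` pair off). Hence `A ≀ Γ → A ≀ (Γ ⧸ K)` kills `N`, and `φ` yields a surjection
`Γ → A ≀ (Γ ⧸ K)`; the target has trivial centre, so it factors through `Γ ⧸ K`. That is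
impossible for finitely generated `Q = Γ ⧸ K`: `A ≀ Q` has at least twice as many homomorphisms
to `ℤ/2` as `Q`, since a nonzero `χ : A → ℤ/2` summed over the base gives new ones.
-/

open SemidirectProduct Multiplicative Function

namespace SemidirectProduct

variable {N G : Type*} [Group G]

theorem inr_mul_mul_inr_inv [Group N] {φ : G →* MulAut N} (g : G) (x : N ⋊[φ] G) :
    inr g * x * (inr g)⁻¹ = ⟨φ g x.left, g * x.right * g⁻¹⟩ := by
  ext <;> simp

theorem surjective_comp_inr [Group N] {φ : G →* MulAut N} {H : Type*} [Group H]
    {f : N ⋊[φ] G →* H} (hf : Surjective f) (hinl : f.comp inl = 1) :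
    Surjective (f.comp inr) := by
  intro h
  obtain ⟨x, rfl⟩ := hf h
  refine ⟨x.right, ?_⟩
  conv_rhs => rw [← inl_left_mul_inr_right x, map_mul, ← MonoidHom.comp_apply f inl, hinl]
  rw [MonoidHom.one_apply, one_mul, MonoidHom.comp_apply]

variable [CommGroup N] {φ : G →* MulAut N}

theorem conj_inl (x : N ⋊[φ] G) (n : N) : x * inl n * x⁻¹ = inl (φ x.right n) := by
  ext <;> simp [mul_right_comm _ _ x.left⁻¹]

theorem inl_commute_iff {n : N} {x : N ⋊[φ] G} : Commute (inl n) x ↔ φ x.right n = n := by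
  rw [commute_iff_eq, eq_comm, ← mul_inv_eq_iff_eq_mul, conj_inl, inl_injective.eq_iff]

theorem inl_mul_mul_inl_inv_mul_inv (n : N) (x : N ⋊[φ] G) :
    inl n * x * (inl n)⁻¹ * x⁻¹ = inl (n * (φ x.right n)⁻¹) := by
  rw [map_mul, ← map_inv (φ x.right), ← conj_inl, map_inv]
  simp only [mul_assoc]

end SemidirectProduct

theorem MonoidHom.map_center_le_center {G H : Type*} [Group G] [Group H] {f : G →* H}
    (hf : Surjective f) : (Subgroup.center G).map f ≤ Subgroup.center H := by
  rintro _ ⟨g, hg, rfl⟩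
  rw [SetLike.mem_coe, Subgroup.mem_center_iff] at hg
  rw [Subgroup.mem_center_iff]
  intro h
  obtain ⟨x, rfl⟩ := hf h
  rw [← map_mul, hg, map_mul]

theorem Finsupp.mapDomain_eq_zero_of_involutive {α β M : Type*} [AddCommMonoid M]
    (hM : ∀ a : M, a + a = 0) {σ : α → α} (hσ : Involutive σ) (hσfix : ∀ x, σ x ≠ x)
    {f : α → β} (hf : ∀ x, f (σ x) = f x) {F : α →₀ M} (hF : ∀ x, F (σ x) = F x) :
    F.mapDomain f = 0 := by
  classical
  refine Finset.sum_involution (fun x _ => σ x) (fun x _ => ?_) (fun x _ _ => hσfix x)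
    (fun x hx => ?_) (fun x _ => hσ x)
  · dsimp only
    rw [hf, hF, ← single_add, hM, single_zero]
  · rwa [mem_support_iff, hF, ← mem_support_iff]

theorem Subgroup.infinite_quotient_of_le_center {Γ : Type*} [Group Γ] [Group.FG Γ] [Infinite Γ]
    {K : Subgroup Γ} (hK : K ≤ center Γ) (htors : ∀ k ∈ K, IsOfFinOrder k) :
    Infinite (Γ ⧸ K) := by
  by_contra hfin
  have : Finite (Γ ⧸ K) := not_infinite_iff_finite.mp hfin
  have : K.FiniteIndex := finiteIndex_of_finite_quotient
  have : IsMulCommutative K := IsMulCommutative.of_setLike_mul_comm fun a ha b _ =>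
    (mem_center_iff.mp (hK ha) b).symm
  open scoped IsMulCommutative in
  have : Finite K := CommGroup.finite_of_fg_isMulTorsion (G := K) fun k =>
    K.subtype_injective.isOfFinOrder_iff.mp (htors k k.2)
  have : Finite Γ := Finite.of_subgroup_quotient K
  exact not_finite Γ

theorem MonoidHom.finite_of_fg (G H : Type*) [Group G] [Group.FG G] [Monoid H] [Finite H] :
    Finite (G →* H) := by
  obtain ⟨S, hS, hSfin⟩ := Group.fg_iff.mp ‹_›
  have := hSfin.to_subtype
  exact Finite.of_injective (fun f : G →* H => fun s : S => f s)
    fun f g hfg => eq_of_eqOn_dense hS fun s hs => congrFun hfg ⟨s, hs⟩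

theorem AddCommGroup.exists_addMonoidHom_zmod_two_ne_zero {A : Type*} [AddCommGroup A]
    [Nontrivial A] (hA : ∀ a : A, a + a = 0) : ∃ χ : A →+ ZMod 2, χ ≠ 0 := by
  let _ : Module (ZMod 2) A := AddCommGroup.zmodModule fun a => by rw [two_nsmul, hA]
  obtain ⟨a, ha⟩ := exists_ne (0 : A)
  obtain ⟨f, hf⟩ := Module.Projective.exists_dual_ne_zero (ZMod 2) ha
  exact ⟨f.toAddMonoidHom, fun h => hf (DFunLike.congr_fun h a)⟩

namespace WreathProduct

open Finsupp

variable {A : Type*} [AddCommGroup A] {Γ : Type*} [Group Γ]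

theorem toAdd_wreathAction_apply (g : Γ) (m : Multiplicative (Γ →₀ A)) (x : Γ) :
    toAdd (wreathAction A Γ g m) x = toAdd m (g⁻¹ * x) :=
  rfl

theorem wreathAction_wreathAction (g h : Γ) (m : Multiplicative (Γ →₀ A)) :
    wreathAction A Γ g (wreathAction A Γ h m) = wreathAction A Γ (g * h) m := by
  rw [map_mul, MulAut.mul_apply]

theorem wreathAction_ofAdd_single (g x : Γ) (a : A) :
    wreathAction A Γ g (ofAdd (single x a)) = ofAdd (single (g * x) a) :=
  congrArg ofAdd (equivMapDomain_single _ _ _)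

theorem mem_base_iff {w : WreathProduct A Γ} : w ∈ base A Γ ↔ w.right = 1 := by
  rw [base, range_inl_eq_ker_rightHom]
  rfl

theorem base_normal : (base A Γ).Normal := by
  rw [base, range_inl_eq_ker_rightHom]
  infer_instance

instance : IsMulCommutative (base A Γ) :=
  IsMulCommutative.of_setLike_mul_comm <| by
    rintro _ ⟨m, rfl⟩ _ ⟨n, rfl⟩
    rw [← map_mul, mul_comm, map_mul]

theorem eq_one_of_forall_wreathAction_eq [Infinite Γ] {m : Multiplicative (Γ →₀ A)}
    (hm : ∀ g, wreathAction A Γ g m = m) : m = 1 := by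
  by_contra hne
  obtain ⟨x, hx⟩ : ∃ x, toAdd m x ≠ 0 := by
    by_contra! h
    apply hne
    apply toAdd.injective
    exact Finsupp.ext h
  have hmem (g : Γ) : g * x ∈ (toAdd m).support := by
    rwa [mem_support_iff, ← hm g, toAdd_wreathAction_apply, inv_mul_cancel_left]
  have : Finite Γ := Finite.of_injective (fun g => (⟨g * x, hmem g⟩ : (toAdd m).support))
    fun g h hgh => mul_right_cancel (congrArg Subtype.val hgh)
  exact not_finite Γ

theorem center_eq_bot [Infinite Γ] [Nontrivial A] : Subgroup.center (WreathProduct A Γ) = ⊥ := by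
  refine (Subgroup.eq_bot_iff_forall _).mpr fun w hw => ?_
  have hcomm := Subgroup.mem_center_iff.mp hw
  obtain ⟨a, ha⟩ := exists_ne (0 : A)
  have hright : w.right = 1 := by
    have h := inl_commute_iff.mp (hcomm (inl (ofAdd (single 1 a))))
    rw [wreathAction_ofAdd_single, mul_one] at h
    exact single_left_injective ha (ofAdd.injective h)
  have hw : w = inl w.left := by
    conv_lhs => rw [← inl_left_mul_inr_right w, hright, map_one, mul_one]
  have hleft : w.left = 1 := eq_one_of_forall_wreathAction_eq fun g => by
    have h := conj_inl (inr g : WreathProduct A Γ) w.left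
    rw [← hw, mul_inv_eq_of_eq_mul (hcomm (inr g)), right_inr] at h
    exact (inl_injective (hw.symm.trans h)).symm
  rw [hw, hleft, map_one]

variable {Δ : Type*} [Group Δ]

noncomputable def mapRight (f : Γ →* Δ) : WreathProduct A Γ →* WreathProduct A Δ :=
  SemidirectProduct.map (AddMonoidHom.toMultiplicative (mapDomain.addMonoidHom f)) f fun g => by
    refine MonoidHom.ext fun m => toAdd.injective ?_
    change mapDomain f (equivMapDomain (Equiv.mulLeft g) (toAdd m))
      = equivMapDomain (Equiv.mulLeft (f g)) (mapDomain f (toAdd m))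
    simp only [equivMapDomain_eq_mapDomain, ← mapDomain_comp]
    congr 1
    ext x
    simp

theorem mapRight_eq_one_iff {f : Γ →* Δ} {w : WreathProduct A Γ} :
    mapRight f w = 1 ↔ (toAdd w.left).mapDomain f = 0 ∧ f w.right = 1 :=
  SemidirectProduct.ext_iff

theorem mapRight_surjective {f : Γ →* Δ} (hf : Surjective f) :
    Surjective (mapRight (A := A) f) := by
  intro v
  obtain ⟨m, hm⟩ := mapDomain_surjective hf (toAdd v.left)
  obtain ⟨g, hg⟩ := hf v.right
  exact ⟨⟨ofAdd m, g⟩, SemidirectProduct.ext hm hg⟩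

noncomputable def liftSum {B : Type*} [AddCommGroup B] (χ : A →+ B) (ξ : Δ →* Multiplicative B) :
    WreathProduct A Δ →* Multiplicative B :=
  SemidirectProduct.lift (AddMonoidHom.toMultiplicative (liftAddHom fun _ => χ)) ξ fun g => by
    refine MonoidHom.ext fun m => toAdd.injective ?_
    change liftAddHom (fun _ => χ) (equivMapDomain (Equiv.mulLeft g) (toAdd m))
      = toAdd (ξ g * ofAdd (liftAddHom (fun _ => χ) (toAdd m)) * (ξ g)⁻¹)
    rw [mul_inv_cancel_comm, toAdd_ofAdd, equivMapDomain_eq_mapDomain, liftAddHom_apply,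
      liftAddHom_apply, sum_mapDomain_index_addMonoidHom]

theorem liftSum_inl_single {B : Type*} [AddCommGroup B] (χ : A →+ B) (ξ : Δ →* Multiplicative B)
    (x : Δ) (a : A) : liftSum χ ξ (inl (ofAdd (single x a))) = ofAdd (χ a) := by
  simp [liftSum]

theorem not_surjective_of_fg {Q : Type*} [Group Q] [Group.FG Q] {χ : A →+ ZMod 2} (hχ : χ ≠ 0)
    (η : Q →* WreathProduct A Q) : ¬Surjective η := by
  intro hη
  have := MonoidHom.finite_of_fg Q (Multiplicative (ZMod 2))
  obtain ⟨a, ha⟩ : ∃ a, χ a ≠ 0 := DFunLike.ne_iff.mp hχ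
  let T (p : ZMod 2 × (Q →* Multiplicative (ZMod 2))) : Q →* Multiplicative (ZMod 2) :=
    (liftSum (p.1 • χ) p.2).comp η
  have hT : Injective T := by
    rintro ⟨ε, ξ⟩ ⟨ε', ξ'⟩ h
    have h' := (MonoidHom.cancel_right hη).mp h
    have hε : ε = ε' := by
      simpa [liftSum_inl_single, ha] using DFunLike.congr_fun h' (inl (ofAdd (single 1 a)))
    have hξ : ξ = ξ' := MonoidHom.ext fun q => by
      simpa [liftSum] using DFunLike.congr_fun h' (inr q)
    rw [hε, hξ]
  have hcard := Nat.card_le_card_of_injective T hT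
  rw [Nat.card_prod, Nat.card_zmod] at hcard
  have : 0 < Nat.card (Q →* Multiplicative (ZMod 2)) := Nat.card_pos
  omega

section NormalCommutative

variable {N : Subgroup (WreathProduct A Γ)} [N.Normal] {w w' : WreathProduct A Γ}

theorem inl_mul_inv_wreathAction_mem (hw : w ∈ N) (b : Multiplicative (Γ →₀ A)) :
    inl (b * (wreathAction A Γ w.right b)⁻¹) ∈ N := by
  rw [← inl_mul_mul_inl_inv_mul_inv]
  exact mul_mem (Subgroup.Normal.conj_mem ‹_› w hw (inl b)) (inv_mem hw)

variable [IsMulCommutative N]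

/-- The base part of the commutator `[inl (single 1 a), w] ∈ N` is `single 1 a - single k a`
(`k = w.right`), and it is fixed by the `Γ`-component of every `w' ∈ N`. -/
theorem single_sub_single_eq (hw : w ∈ N) (hw' : w' ∈ N) (a : A) :
    single w'.right a - single (w'.right * w.right) a = single 1 a - single w.right a := by
  have h := inl_commute_iff.mp (setLike_mul_comm (inl_mul_inv_wreathAction_mem hw
    (ofAdd (single 1 a))) hw')
  simpa [wreathAction_ofAdd_single, sub_eq_add_neg, mul_assoc] using congrArg toAdd h

theorem add_self_eq_zero (hw : w ∈ N) (hk : w.right ≠ 1) (a : A) : a + a = 0 := by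
  have h := DFunLike.congr_fun (single_sub_single_eq hw hw a) w.right
  simp [hk] at h
  exact eq_neg_iff_add_eq_zero.mp h

theorem right_mul_right_eq_one [Nontrivial A] (hw : w ∈ N) (hw' : w' ∈ N) (hk : w.right ≠ 1)
    (hk' : w'.right ≠ 1) : w'.right * w.right = 1 := by
  obtain ⟨a, ha⟩ := exists_ne (0 : A)
  have h := DFunLike.congr_fun (single_sub_single_eq hw hw' a) 1
  simp [Ne.symm hk, Ne.symm hk'] at h
  by_contra hne
  simp [hne] at h
  exact ha h.symm

theorem right_mul_self_eq_one [Nontrivial A] (hw : w ∈ N) : w.right * w.right = 1 := by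
  by_cases hk : w.right = 1
  · rw [hk, mul_one]
  · exact right_mul_right_eq_one hw hw hk hk

theorem right_mem_center [Nontrivial A] (hw : w ∈ N) : w.right ∈ Subgroup.center Γ := by
  rw [Subgroup.mem_center_iff]
  intro g
  by_cases hk : w.right = 1
  · rw [hk, mul_one, one_mul]
  have hconj : inr g * w * (inr g)⁻¹ ∈ N := Subgroup.Normal.conj_mem ‹_› w hw (inr g)
  have hright : (inr g * w * (inr g)⁻¹).right = g * w.right * g⁻¹ := by
    rw [inr_mul_mul_inr_inv]
  have hk' : g * w.right * g⁻¹ ≠ 1 := by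
    rwa [Ne, mul_inv_eq_one, mul_eq_left]
  have h := right_mul_right_eq_one hw hconj hk (hright ▸ hk')
  rwa [hright, ← right_mul_self_eq_one hw, mul_left_inj, mul_inv_eq_iff_eq_mul] at h

theorem wreathAction_right_left [Infinite Γ] [Nontrivial A] (hw : w ∈ N) :
    wreathAction A Γ w.right w.left = w.left := by
  have hcomm (g : Γ) : g * w.right = w.right * g :=
    Subgroup.mem_center_iff.mp (right_mem_center hw) g
  obtain ⟨F, k⟩ := w
  dsimp only at hcomm ⊢
  suffices F * (wreathAction A Γ k F)⁻¹ = 1 from (mul_inv_eq_one.mp this).symm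
  refine eq_one_of_forall_wreathAction_eq fun g => ?_
  have hconj := Subgroup.Normal.conj_mem ‹_› _ hw (inr g)
  rw [inr_mul_mul_inr_inv] at hconj
  dsimp only at hconj
  rw [mul_inv_eq_of_eq_mul (hcomm g)] at hconj
  have hleft := congrArg SemidirectProduct.left (setLike_mul_comm hconj hw)
  change wreathAction A Γ g F * wreathAction A Γ k F = F * wreathAction A Γ k (wreathAction A Γ g F)
    at hleft
  rw [map_mul, map_inv, wreathAction_wreathAction, hcomm, ← wreathAction_wreathAction,
    ← div_eq_mul_inv, ← div_eq_mul_inv, div_eq_div_iff_mul_eq_mul]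
  exact hleft

theorem mapDomain_mk_left_eq_zero [Infinite Γ] [Nontrivial A] (hw : w ∈ N) (hk : w.right ≠ 1)
    {K : Subgroup Γ} (hkK : w.right ∈ K) :
    (toAdd w.left).mapDomain (QuotientGroup.mk : Γ → Γ ⧸ K) = 0 := by
  have hk2 := right_mul_self_eq_one hw
  refine mapDomain_eq_zero_of_involutive (add_self_eq_zero hw hk) (σ := (w.right * ·))
    (fun x => by simp only [← mul_assoc, hk2, one_mul]) (fun x => by simpa only [Ne, mul_eq_right])
    (fun x => ?_) (fun x => ?_)
  · rw [← Subgroup.mem_center_iff.mp (right_mem_center hw) x]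
    exact QuotientGroup.mk_mul_of_mem x hkK
  · conv_rhs => rw [← wreathAction_right_left hw]
    rw [toAdd_wreathAction_apply, inv_eq_of_mul_eq_one_right hk2]

theorem mapRight_mk'_eq_one [Infinite Γ] [Nontrivial A] {K : Subgroup Γ} [K.Normal]
    (hNK : N.map rightHom ≤ K) {w₀ : WreathProduct A Γ} (hw₀ : w₀ ∈ N) (hk₀ : w₀.right ≠ 1)
    (hw : w ∈ N) : mapRight (QuotientGroup.mk' K) w = 1 := by
  have hK {v} (hv : v ∈ N) : v.right ∈ K := hNK ⟨v, hv, rfl⟩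
  refine mapRight_eq_one_iff.mpr ⟨?_, (QuotientGroup.eq_one_iff _).mpr (hK hw)⟩
  by_cases hk : w.right = 1
  · have hk' : (w * w₀).right ≠ 1 := by rwa [mul_right, hk, one_mul]
    have h := mapDomain_mk_left_eq_zero (mul_mem hw hw₀) hk' (hK (mul_mem hw hw₀))
    have hleft : toAdd (w * w₀).left = toAdd w.left + toAdd w₀.left := by
      rw [mul_left, hk, map_one, MulAut.one_apply, toAdd_mul]
    rwa [hleft, mapDomain_add, mapDomain_mk_left_eq_zero hw₀ hk₀ (hK hw₀), add_zero] at h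
  · exact mapDomain_mk_left_eq_zero hw hk (hK hw)

end NormalCommutative

end WreathProduct

open WreathProduct

/-- Let `A` be a nontrivial abelian group and `Γ` a finitely generated infinite group.
Then every surjective endomorphism of `A ≀ Γ` is basic: it maps the base group into
the base group. -/
theorem surjective_endomorphism_isBasic (A : Type*) [AddCommGroup A] [Nontrivial A]
    (Γ : Type*) [Group Γ] [Group.FG Γ] [Infinite Γ]
    (φ : WreathProduct A Γ →* WreathProduct A Γ) (hφ : Function.Surjective φ) :
    ∀ x ∈ WreathProduct.base A Γ, φ x ∈ WreathProduct.base A Γ := by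
  rintro _ ⟨y, rfl⟩
  rw [mem_base_iff]
  by_contra hk
  let N := (base A Γ).map φ
  have : N.Normal := base_normal.map φ hφ
  have hw₀ : φ (inl y) ∈ N := Subgroup.mem_map_of_mem φ ⟨y, rfl⟩
  let K := N.map rightHom
  have hKcenter : K ≤ Subgroup.center Γ := by
    rintro _ ⟨w, hw, rfl⟩
    exact right_mem_center hw
  have : K.Normal := ‹N.Normal›.map rightHom rightHom_surjective
  have : Infinite (Γ ⧸ K) := Subgroup.infinite_quotient_of_le_center hKcenter fun k => by
    rintro ⟨w, hw, rfl⟩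
    exact isOfFinOrder_iff_pow_eq_one.mpr
      ⟨2, two_pos, (pow_two _).trans (right_mul_self_eq_one hw)⟩
  obtain ⟨χ, hχ⟩ := AddCommGroup.exists_addMonoidHom_zmod_two_ne_zero (add_self_eq_zero hw₀ hk)
  let ψ := (mapRight (A := A) (QuotientGroup.mk' K)).comp φ
  have hψ : ψ.comp inl = 1 := MonoidHom.ext fun m =>
    mapRight_mk'_eq_one le_rfl hw₀ hk (Subgroup.mem_map_of_mem φ ⟨m, rfl⟩)
  have hψsurj : Surjective ψ := (mapRight_surjective (QuotientGroup.mk'_surjective K)).comp hφ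
  have hθ : Surjective (ψ.comp inr) := surjective_comp_inr hψsurj hψ
  have hKθ : K ≤ (ψ.comp inr).ker := fun k hk => by
    rw [MonoidHom.mem_ker, ← Subgroup.mem_bot, ← center_eq_bot]
    exact MonoidHom.map_center_le_center hθ ⟨k, hKcenter hk, rfl⟩
  exact not_surjective_of_fg hχ (QuotientGroup.lift K _ hKθ)
    (QuotientGroup.lift_surjective_of_surjective _ _ hθ _)
end

section
/- Let N and G be groups, let φ : G →* MulAut N, and let W = N ⋊[φ] G be the semidirect product. Let ψ : W → W be a surjective group homomorphism such that ψ maps the canonical copy of N (the range of inl) into itself, and suppose that G is Hopfian. Then ψ(inl N) = inl N and ker ψ ≤ inl N. If moreover N is abelian, then there exists an automorphism α of G such that the map W → W determined by inl(n)·inr(g) ↦ ψ(inl n)·inr(α g) is a surjective group homomorphism with the same kernel as ψ; in particular ψ is injective if and only if this map is injective. -/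
open SemidirectProduct in
/-- Let `ψ` be a surjective endomorphism of a semidirect product `N ⋊[φ] G` mapping the
canonical copy of `N` into itself, with `G` Hopfian. Then `ψ (inl N) = inl N` and
`ker ψ ≤ inl N`. If moreover `N` is abelian, there is an automorphism `α` of `G` such
that `inl n * inr g ↦ ψ (inl n) * inr (α g)` defines a surjective endomorphism with the
same kernel as `ψ`; in particular `ψ` is injective iff this map is. -/
theorem semidirect_epimorphism_structure {N G : Type*} [Group N] [Group G]
    (φ : G →* MulAut N) (ψ : (N ⋊[φ] G) →* (N ⋊[φ] G)) (hψ : Function.Surjective ψ)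
    (hbasic : ∀ n : N, ψ (inl n) ∈ (inl : N →* N ⋊[φ] G).range)
    (hG : IsHopfian G) :
    ((inl : N →* N ⋊[φ] G).range.map ψ = (inl : N →* N ⋊[φ] G).range ∧
      ψ.ker ≤ (inl : N →* N ⋊[φ] G).range) ∧
    ((∀ a b : N, a * b = b * a) →
      ∃ (α : MulAut G) (χ : (N ⋊[φ] G) →* (N ⋊[φ] G)),
        (∀ (n : N) (g : G), χ (inl n * inr g) = ψ (inl n) * inr (α g)) ∧
        Function.Surjective χ ∧ χ.ker = ψ.ker ∧
        (Function.Injective ψ ↔ Function.Injective χ)) := by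
  -- the induced map on `G`
  set β : G →* G := rightHom.comp (ψ.comp inr) with hβ
  have hψinl : ∀ n : N, ψ (inl n) = inl ((ψ (inl n)).left) := by
    intro n
    obtain ⟨m, hm⟩ := hbasic n
    rw [← hm]; simp
  have hrw : ∀ w : N ⋊[φ] G, rightHom (ψ w) = β w.right := by
    intro w
    conv_lhs => rw [← inl_left_mul_inr_right w]
    rw [map_mul, map_mul, hψinl, rightHom_inl, one_mul]
    rfl
  have hβsurj : Function.Surjective β := by
    intro g
    obtain ⟨w, hw⟩ := hψ (inr g)
    refine ⟨w.right, ?_⟩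
    rw [← hrw, hw, rightHom_inr]
  have hβinj : Function.Injective β := hG β hβsurj
  have hker : ψ.ker ≤ (inl : N →* N ⋊[φ] G).range := by
    intro w hw
    rw [MonoidHom.mem_ker] at hw
    have h1 : β w.right = 1 := by rw [← hrw, hw, map_one]
    have h2 : w.right = 1 := hβinj (by rw [h1, map_one])
    rw [range_inl_eq_ker_rightHom, MonoidHom.mem_ker]
    exact h2
  have hmap : (inl : N →* N ⋊[φ] G).range.map ψ = (inl : N →* N ⋊[φ] G).range := by
    apply le_antisymm
    · rintro x ⟨y, ⟨n, rfl⟩, rfl⟩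
      exact hbasic n
    · rintro x ⟨m, rfl⟩
      obtain ⟨w, hw⟩ := hψ (inl m)
      have h1 : β w.right = 1 := by rw [← hrw, hw, rightHom_inl]
      have h2 : w.right = 1 := hβinj (by rw [h1, map_one])
      refine ⟨w, ⟨w.left, ?_⟩, hw⟩
      conv_rhs => rw [← inl_left_mul_inr_right w]
      rw [h2, map_one, mul_one]
  refine ⟨⟨hmap, hker⟩, fun hab => ?_⟩
  -- Part 2
  have hdec : ∀ g : G, ψ (inr g) = inl ((ψ (inr g)).left) * inr (β g) := by
    intro g
    have h2 : (ψ (inr g)).right = β g := by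
      have := hrw (inr g)
      rw [rightHom_eq_right] at this
      simpa using this
    conv_lhs => rw [← inl_left_mul_inr_right (ψ (inr g)), h2]
  have hcompat : ∀ g : G, (ψ.comp inl).comp (φ g).toMonoidHom =
      (MulAut.conj ((inr.comp β) g)).toMonoidHom.comp (ψ.comp inl) := by
    intro g
    refine MonoidHom.ext fun n => ?_
    simp only [MonoidHom.comp_apply, MulEquiv.coe_toMonoidHom, MulAut.conj_apply]
    rw [inl_aut, map_mul, map_mul, map_inv, map_inv, hdec, hψinl n]
    set a := (ψ (inr g)).left
    set m := (ψ (inl n)).left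
    have haut : inr (β g) * inl m * (inr (β g))⁻¹ = (inl (φ (β g) m) : N ⋊[φ] G) := by
      rw [inl_aut, map_inv]
    rw [mul_inv_rev, show inl a * inr (β g) * inl m * ((inr (β g))⁻¹ * (inl a)⁻¹)
        = inl a * (inr (β g) * inl m * (inr (β g))⁻¹) * (inl a)⁻¹ by group,
      haut, ← map_inv, ← map_mul, ← map_mul, hab a (φ (β g) m), mul_inv_cancel_right]
  set χ : (N ⋊[φ] G) →* (N ⋊[φ] G) := SemidirectProduct.lift (ψ.comp inl) (inr.comp β) hcompat
    with hχ
  have hχval : ∀ (n : N) (g : G), χ (inl n * inr g) = ψ (inl n) * inr (β g) := by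
    intro n g
    rw [map_mul]
    simp [hχ, SemidirectProduct.lift]
  have hχker : χ.ker = ψ.ker := by
    ext w
    obtain ⟨a, b, rfl⟩ : ∃ a b, w = inl a * inr b :=
      ⟨w.left, w.right, (inl_left_mul_inr_right w).symm⟩
    simp only [MonoidHom.mem_ker, hχval]
    rw [hψinl a]
    set m := (ψ (inl a)).left with hm
    have hlr : ∀ (x : N) (y : G), (inl x * inr y : N ⋊[φ] G) = 1 ↔ x = 1 ∧ y = 1 := by
      intro x y
      constructor
      · intro h
        have h1 := congrArg SemidirectProduct.right h
        have h2 := congrArg SemidirectProduct.left h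
        simp at h1 h2
        exact ⟨h2, h1⟩
      · rintro ⟨rfl, rfl⟩; simp
    rw [map_mul, hψinl a, ← hm, hdec b, ← mul_assoc, ← map_mul, hlr, hlr]
    constructor
    · rintro ⟨h1, h2⟩
      have hb : b = 1 := hβinj (by rw [h2, map_one])
      subst hb
      have : (ψ (inr (1:G))).left = 1 := by simp
      rw [this, mul_one]
      exact ⟨h1, map_one β⟩
    · rintro ⟨h1, h2⟩
      have hb : b = 1 := hβinj (by rw [h2, map_one])
      subst hb
      have : (ψ (inr (1:G))).left = 1 := by simp
      rw [this, mul_one] at h1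
      exact ⟨h1, h2⟩
  have hχsurj : Function.Surjective χ := by
    intro w
    obtain ⟨a, b, rfl⟩ : ∃ a b, w = inl a * inr b := ⟨w.left, w.right, (inl_left_mul_inr_right w).symm⟩
    have hmem : (inl a : N ⋊[φ] G) ∈ (inl : N →* N ⋊[φ] G).range := ⟨a, rfl⟩
    rw [← hmap] at hmem
    obtain ⟨y, ⟨n, rfl⟩, hy⟩ := hmem
    obtain ⟨g, hg⟩ := hβsurj b
    exact ⟨inl n * inr g, by rw [hχval, hy, hg]⟩
  refine ⟨MulEquiv.ofBijective β ⟨hβinj, hβsurj⟩, χ, hχval, hχsurj, hχker, ?_⟩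
  rw [← MonoidHom.ker_eq_bot_iff, ← MonoidHom.ker_eq_bot_iff, hχker]
end

section
/- Let R be a unital ring, let m ≥ 1, and let d : Fin m → ℕ. Index the rows and columns of matrices by the type Σ_{i : Fin m} Fin (d i), and call a matrix X over R block upper-triangular if X ⟨i,a⟩ ⟨j,b⟩ = 0 whenever j < i. Then the ring B of block upper-triangular matrices is directly finite (for all block upper-triangular X, Y with XY = I one has YX = I) if and only if the matrix ring M_D(R) is directly finite, where D = max_{i} d i. -/
/-- A matrix indexed by `Σ i : Fin m, Fin (d i)` is block upper-triangular if its
`(⟨i,a⟩, ⟨j,b⟩)` entry vanishes whenever `j < i`. -/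
def BlockUpperTriangular {R : Type*} [Ring R] {m : ℕ} (d : Fin m → ℕ)
    (X : Matrix ((i : Fin m) × Fin (d i)) ((i : Fin m) × Fin (d i)) R) : Prop :=
  ∀ (i j : Fin m) (a : Fin (d i)) (b : Fin (d j)), j < i → X ⟨i, a⟩ ⟨j, b⟩ = 0

section Aux

variable {R : Type*} [Ring R] {m : ℕ} {d : Fin m → ℕ}

private lemma df_of_ringEquiv {S T : Type*} [Ring S] [Ring T] (e : S ≃+* T)
    (h : DirectlyFinite S) : DirectlyFinite T := by
  intro x y hxy
  have h1 : e.symm x * e.symm y = 1 := by rw [← map_mul, hxy, map_one]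
  have h2 := h _ _ h1
  have h3 := congrArg e h2
  simpa using h3

private lemma BUT_mul {X Y : Matrix ((i : Fin m) × Fin (d i)) ((i : Fin m) × Fin (d i)) R}
    (hX : BlockUpperTriangular d X) (hY : BlockUpperTriangular d Y) :
    BlockUpperTriangular d (X * Y) := by
  intro i j a b hji
  rw [Matrix.mul_apply]
  apply Finset.sum_eq_zero
  rintro ⟨k, c⟩ -
  rcases lt_or_ge k i with hk | hk
  · rw [hX i k a c hk, zero_mul]
  · rw [hY k j c b (lt_of_lt_of_le hji hk), mul_zero]

private lemma BUT_one : BlockUpperTriangular d (1 : Matrix ((i : Fin m) × Fin (d i)) _ R) := by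
  intro i j a b hji
  exact Matrix.one_apply_ne (by rintro ⟨⟩; exact absurd hji (lt_irrefl _))

/-- Diagonal block of a product of block upper-triangular matrices. -/
private lemma diag_block_mul {X Y : Matrix ((i : Fin m) × Fin (d i)) ((i : Fin m) × Fin (d i)) R}
    (hX : BlockUpperTriangular d X) (hY : BlockUpperTriangular d Y)
    (i : Fin m) (a b : Fin (d i)) :
    (X * Y) ⟨i, a⟩ ⟨i, b⟩ = ∑ c, X ⟨i, a⟩ ⟨i, c⟩ * Y ⟨i, c⟩ ⟨i, b⟩ := by
  rw [Matrix.mul_apply, ← Finset.univ_sigma_univ, Finset.sum_sigma]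
  refine Finset.sum_eq_single_of_mem i (Finset.mem_univ i) ?_
  intro k _ hk
  apply Finset.sum_eq_zero
  intro c _
  rcases lt_or_ge k i with h | h
  · rw [hX i k a c h, zero_mul]
  · rw [hY k i c b (lt_of_le_of_ne h (Ne.symm hk)), mul_zero]

/-- A strictly block upper-triangular matrix to a power kills enough entries. -/
private lemma strict_pow {N : Matrix ((i : Fin m) × Fin (d i)) ((i : Fin m) × Fin (d i)) R}
    (hN : ∀ x y : (i : Fin m) × Fin (d i), (y.1 : ℕ) ≤ (x.1 : ℕ) → N x y = 0) :
    ∀ (k : ℕ) (x y : (i : Fin m) × Fin (d i)), (y.1 : ℕ) < (x.1 : ℕ) + k → (N ^ k) x y = 0 := by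
  intro k
  induction k with
  | zero =>
    intro x y h
    rw [pow_zero]
    exact Matrix.one_apply_ne (by rintro rfl; omega)
  | succ k ih =>
    intro x y h
    rw [pow_succ', Matrix.mul_apply]
    apply Finset.sum_eq_zero
    intro z _
    rcases le_or_gt (z.1 : ℕ) (x.1 : ℕ) with hz | hz
    · rw [hN x z hz, zero_mul]
    · rw [ih z y (by omega), mul_zero]

variable (d) in
/-- Embed a `d i0 × d i0` matrix as a block-diagonal matrix: `A` at block `i0`, identity
elsewhere. -/
private def Emb (i0 : Fin m) (A : Matrix (Fin (d i0)) (Fin (d i0)) R) :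
    Matrix ((i : Fin m) × Fin (d i)) ((i : Fin m) × Fin (d i)) R :=
  Matrix.blockDiagonal' (Function.update (fun i => (1 : Matrix (Fin (d i)) (Fin (d i)) R)) i0 A)

private lemma Emb_one (i0 : Fin m) : Emb d i0 (1 : Matrix (Fin (d i0)) (Fin (d i0)) R) = 1 := by
  unfold Emb
  rw [show Function.update (fun i => (1 : Matrix (Fin (d i)) (Fin (d i)) R)) i0 1
      = fun i => 1 from Function.update_eq_self i0 _]
  exact Matrix.blockDiagonal'_one

private lemma Emb_mul (i0 : Fin m) (A B : Matrix (Fin (d i0)) (Fin (d i0)) R) :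
    Emb d i0 A * Emb d i0 B = Emb d i0 (A * B) := by
  unfold Emb
  rw [← Matrix.blockDiagonal'_mul]
  refine congrArg Matrix.blockDiagonal' ?_
  funext i
  by_cases h : i = i0
  · subst h; simp [Function.update_self]
  · simp [Function.update_of_ne h]

private lemma Emb_BUT (i0 : Fin m) (A : Matrix (Fin (d i0)) (Fin (d i0)) R) :
    BlockUpperTriangular d (Emb d i0 A) := by
  intro i j a b hji
  unfold Emb
  exact Matrix.blockDiagonal'_apply_ne
    (Function.update (fun i => (1 : Matrix (Fin (d i)) (Fin (d i)) R)) i0 A) a b hji.ne'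

private lemma Emb_inj (i0 : Fin m) {A B : Matrix (Fin (d i0)) (Fin (d i0)) R}
    (h : Emb d i0 A = Emb d i0 B) : A = B := by
  have h2 := Matrix.blockDiagonal'_injective h
  have h3 := congrFun h2 i0
  simpa [Function.update_self] using h3

end Aux

/-- The ring of block upper-triangular matrices with block sizes `d 0, …, d (m-1)` is
directly finite iff `M_D(R)` is directly finite, where `D = max_i d i`. -/
theorem blockUpperTriangular_directlyFinite_iff (R : Type*) [Ring R]
    (m : ℕ) (hm : 1 ≤ m) (d : Fin m → ℕ) :
    (∀ X Y : Matrix ((i : Fin m) × Fin (d i)) ((i : Fin m) × Fin (d i)) R,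
        BlockUpperTriangular d X → BlockUpperTriangular d Y → X * Y = 1 → Y * X = 1) ↔
    DirectlyFinite (Matrix (Fin (Finset.univ.sup d)) (Fin (Finset.univ.sup d)) R) := by
  set D := Finset.univ.sup d with hD
  have : NeZero m := ⟨by omega⟩
  obtain ⟨i0, -, hi0⟩ := Finset.exists_mem_eq_sup Finset.univ
    (Finset.univ_nonempty (α := Fin m)) d
  -- `hi0 : D = d i0`
  constructor
  · -- block ring directly finite → M_D directly finite
    intro h
    have hdf : DirectlyFinite (Matrix (Fin (d i0)) (Fin (d i0)) R) := by
      intro A B hAB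
      have h1 : Emb d i0 A * Emb d i0 B = 1 := by
        rw [Emb_mul, hAB, Emb_one]
      have h2 := h _ _ (Emb_BUT i0 A) (Emb_BUT i0 B) h1
      rw [Emb_mul, ← Emb_one i0] at h2
      exact Emb_inj i0 h2
    exact df_of_ringEquiv
      ((Matrix.reindexAlgEquiv ℕ R (finCongr hi0.symm)).toRingEquiv) hdf
  · -- M_D directly finite → block ring directly finite
    intro hDF X Y hX hY hXY
    -- Step 1: each M_{d i}(R) is directly finite, via a corner of M_D(R)
    have hdi : ∀ i : Fin m, DirectlyFinite (Matrix (Fin (d i)) (Fin (d i)) R) := by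
      intro i
      have hle : d i ≤ D := Finset.le_sup (Finset.mem_univ i)
      have hsum : d i + (D - d i) = D := Nat.add_sub_cancel' hle
      have hDF2 : DirectlyFinite (Matrix (Fin (d i) ⊕ Fin (D - d i))
          (Fin (d i) ⊕ Fin (D - d i)) R) := by
        refine df_of_ringEquiv
          ((Matrix.reindexAlgEquiv ℕ R
            ((finSumFinEquiv.trans (finCongr hsum)).symm)).toRingEquiv) hDF
      intro A B hAB
      have h1 : Matrix.fromBlocks A 0 0 (1 : Matrix (Fin (D - d i)) (Fin (D - d i)) R) *
          Matrix.fromBlocks B 0 0 1 = 1 := by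
        rw [Matrix.fromBlocks_multiply]
        simp [hAB, Matrix.fromBlocks_one]
      have h2 := hDF2 _ _ h1
      rw [Matrix.fromBlocks_multiply] at h2
      simp only [Matrix.mul_zero, Matrix.zero_mul, Matrix.mul_one, Matrix.one_mul, add_zero, zero_add, mul_zero, zero_mul, mul_one, one_mul] at h2
      have hone : (Matrix.toBlocks₁₁ (1 : Matrix (Fin (d i) ⊕ Fin (D - d i))
          (Fin (d i) ⊕ Fin (D - d i)) R)) = 1 := by
        rw [← Matrix.fromBlocks_one, Matrix.toBlocks_fromBlocks₁₁]
      have h4 := congrArg Matrix.toBlocks₁₁ h2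
      rw [Matrix.toBlocks_fromBlocks₁₁, hone] at h4
      exact h4
    -- Step 2: diagonal blocks of X, Y multiply to 1, hence reversed too
    have hdiagXY : ∀ (i : Fin m) (a b : Fin (d i)),
        (∑ c, X ⟨i, a⟩ ⟨i, c⟩ * Y ⟨i, c⟩ ⟨i, b⟩) = (1 : Matrix (Fin (d i)) (Fin (d i)) R) a b := by
      intro i a b
      rw [← diag_block_mul hX hY i a b, hXY]
      simp [Matrix.one_apply, Sigma.mk.inj_iff]
    have hdiagYX : ∀ (i : Fin m) (a b : Fin (d i)),
        (∑ c, Y ⟨i, a⟩ ⟨i, c⟩ * X ⟨i, c⟩ ⟨i, b⟩) = (1 : Matrix (Fin (d i)) (Fin (d i)) R) a b := by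
      intro i a b
      have h1 : (Matrix.of fun a b => X ⟨i, a⟩ ⟨i, b⟩) *
          (Matrix.of fun a b => Y ⟨i, a⟩ ⟨i, b⟩) = (1 : Matrix (Fin (d i)) (Fin (d i)) R) := by
        ext a b
        rw [Matrix.mul_apply]
        simpa using hdiagXY i a b
      have h2 := hdi i _ _ h1
      have h3 := congrFun (congrFun h2 a) b
      rw [Matrix.mul_apply] at h3
      simpa using h3
    -- Step 3: N := Y*X - 1 is strictly block upper-triangular, idempotent trick
    set T := Y * X with hT
    have hTBUT : BlockUpperTriangular d T := BUT_mul hY hX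
    have hTdiag : ∀ (i : Fin m) (a b : Fin (d i)),
        T ⟨i, a⟩ ⟨i, b⟩ = (1 : Matrix ((i : Fin m) × Fin (d i)) ((i : Fin m) × Fin (d i)) R) ⟨i, a⟩ ⟨i, b⟩ := by
      intro i a b
      rw [hT, diag_block_mul hY hX i a b, hdiagYX i a b]
      simp [Matrix.one_apply, Sigma.mk.inj_iff]
    set N := T - 1 with hN
    have hNS : ∀ x y : (i : Fin m) × Fin (d i), (y.1 : ℕ) ≤ (x.1 : ℕ) → N x y = 0 := by
      rintro ⟨i, a⟩ ⟨j, b⟩ hji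
      rcases lt_or_eq_of_le hji with hlt | heq
      · have hjilt : j < i := hlt
        rw [hN, Matrix.sub_apply, hTBUT i j a b hjilt, BUT_one i j a b hjilt, sub_zero]
      · have hij : j = i := Fin.ext heq
        subst hij
        rw [hN, Matrix.sub_apply, hTdiag j a b, sub_self]
    -- T is idempotent
    have hTT : T * T = T := by
      rw [hT, show Y * X * (Y * X) = Y * (X * Y) * X by noncomm_ring, hXY, mul_one]
    have hNN : N * N = -N := by
      have h5 : (T - 1) * (T - 1) = -(T - 1) := by
        rw [sub_mul, mul_sub, mul_sub, hTT]
        noncomm_ring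
      rw [hN]
      exact h5
    -- N^(k+1) = (-1)^k • N
    have hpow : ∀ k : ℕ, N ^ (k + 1) = ((-1 : ℤ) ^ k) • N := by
      intro k
      induction k with
      | zero => simp
      | succ k ih =>
        rw [pow_succ, ih, smul_mul_assoc, hNN, pow_succ, mul_smul, neg_smul, one_smul]
    have hNm : N ^ m = 0 := by
      ext x y
      rw [Matrix.zero_apply]
      exact strict_pow hNS m x y (by have := x.1.isLt; have := y.1.isLt; omega)
    have hNzero : N = 0 := by
      obtain ⟨k, hk⟩ : ∃ k, m = k + 1 := ⟨m - 1, by omega⟩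
      have h1 : ((-1 : ℤ) ^ k) • N = 0 := by rw [← hpow k, ← hk, hNm]
      have h2 := congrArg (fun M => ((-1 : ℤ) ^ k) • M) h1
      simpa [smul_smul, ← pow_add, pow_mul_comm, Even.neg_one_pow ⟨k, rfl⟩] using h2
    have : T = 1 := by
      have := hNzero
      rw [hN, sub_eq_zero] at this
      exact this
    exact this
end

section
/- Let R be a unital ring, let m ≥ 1, and let d : Fin m → ℕ, and suppose that the matrix ring M_D(R) is directly finite, where D = max_{i} d i. Index the rows and columns of matrices by the type Σ_{i : Fin m} Fin (d i), and call a matrix X over R block upper-triangular if X ⟨i,a⟩ ⟨j,b⟩ = 0 whenever j < i. If X is block upper-triangular and Y is any matrix (indexed by the same type) with XY = I, then Y is block upper-triangular. -/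
lemma dfSub {R : Type*} [Ring R] {k D : ℕ} (hk : k ≤ D)
    (h : DirectlyFinite (Matrix (Fin D) (Fin D) R)) :
    DirectlyFinite (Matrix (Fin k) (Fin k) R) := by
  intro A B hAB
  let e : Fin k ⊕ Fin (D - k) ≃ Fin D :=
    finSumFinEquiv.trans (finCongr (Nat.add_sub_cancel' hk))
  have key : ∀ C C' : Matrix (Fin k) (Fin k) R,
      (Matrix.fromBlocks C 0 0 1).submatrix e.symm e.symm *
        (Matrix.fromBlocks C' 0 0 1).submatrix e.symm e.symm =
      (Matrix.fromBlocks (C * C') 0 0 1).submatrix e.symm e.symm := by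
    intro C C'
    rw [Matrix.submatrix_mul_equiv, Matrix.fromBlocks_multiply]
    simp
  have h1 : (Matrix.fromBlocks A 0 0 (1 : Matrix (Fin (D-k)) (Fin (D-k)) R)).submatrix e.symm e.symm *
      (Matrix.fromBlocks B 0 0 1).submatrix e.symm e.symm = 1 := by
    rw [key, hAB, Matrix.fromBlocks_one, Matrix.submatrix_one_equiv]
  have h2 := h _ _ h1
  rw [key] at h2
  have h3 : (Matrix.fromBlocks (B * A) 0 0 (1 : Matrix (Fin (D-k)) (Fin (D-k)) R)) = 1 := by
    have := congrArg (fun M => M.submatrix e e) h2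
    simpa [Matrix.submatrix_submatrix, Matrix.submatrix_one_equiv] using this
  have := congrArg Matrix.toBlocks₁₁ h3
  rwa [Matrix.toBlocks_fromBlocks₁₁, ← Matrix.fromBlocks_one, Matrix.toBlocks_fromBlocks₁₁] at this

/-- Suppose `M_D(R)` is directly finite, where `D = max_i d i`. If `X` is block
upper-triangular and `X * Y = 1`, then `Y` is block upper-triangular. -/
theorem right_inverse_of_blockUpperTriangular (R : Type*) [Ring R]
    (m : ℕ) (hm : 1 ≤ m) (d : Fin m → ℕ)
    (hDF : DirectlyFinite (Matrix (Fin (Finset.univ.sup d)) (Fin (Finset.univ.sup d)) R))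
    (X Y : Matrix ((i : Fin m) × Fin (d i)) ((i : Fin m) × Fin (d i)) R)
    (hX : BlockUpperTriangular d X) (hXY : X * Y = 1) :
    BlockUpperTriangular d Y := by
  have wf : WellFounded ((· > ·) : Fin m → Fin m → Prop) := IsWellFounded.wf
  intro i
  induction i using wf.induction with
  | _ i IH =>
    intro j a b hji
    -- key sum identity for j ≤ i
    have key : ∀ (j : Fin m), j ≤ i → ∀ (a : Fin (d i)) (b : Fin (d j)),
        ∑ c : Fin (d i), X ⟨i, a⟩ ⟨i, c⟩ * Y ⟨i, c⟩ ⟨j, b⟩ =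
        (1 : Matrix ((i : Fin m) × Fin (d i)) ((i : Fin m) × Fin (d i)) R) ⟨i, a⟩ ⟨j, b⟩ := by
      intro j hj a b
      rw [← hXY, Matrix.mul_apply, ← Finset.univ_sigma_univ, Finset.sum_sigma]
      symm
      refine Finset.sum_eq_single_of_mem i (Finset.mem_univ i) fun k _ hk => ?_
      rcases lt_or_gt_of_ne hk with h | h
      · refine Finset.sum_eq_zero fun c _ => ?_
        rw [hX i k a c h, zero_mul]
      · refine Finset.sum_eq_zero fun c _ => ?_
        rw [IH k h j c b (lt_of_le_of_lt hj h), mul_zero]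
    set Xi : Matrix (Fin (d i)) (Fin (d i)) R := fun a b => X ⟨i, a⟩ ⟨i, b⟩ with hXi
    set Yi : Matrix (Fin (d i)) (Fin (d i)) R := fun a b => Y ⟨i, a⟩ ⟨i, b⟩ with hYi
    have hdi : d i ≤ Finset.univ.sup d := Finset.le_sup (Finset.mem_univ i)
    have hXiYi : Xi * Yi = 1 := by
      ext a c
      rw [Matrix.mul_apply]
      rw [key i le_rfl a c]
      simp [Matrix.one_apply, Sigma.ext_iff]
    have hYiXi : Yi * Xi = 1 := dfSub hdi hDF _ _ hXiYi
    set Yij : Matrix (Fin (d i)) (Fin (d j)) R := fun c b => Y ⟨i, c⟩ ⟨j, b⟩ with hYij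
    have hXYij : Xi * Yij = 0 := by
      ext a c
      rw [Matrix.mul_apply]
      rw [key j (le_of_lt hji) a c]
      have : (⟨i, a⟩ : (i : Fin m) × Fin (d i)) ≠ ⟨j, c⟩ := by
        intro h
        exact absurd (congrArg Sigma.fst h) (ne_of_gt hji)
      simp [Matrix.one_apply, this]
    have : Yij = 0 := by
      calc Yij = (Yi * Xi) * Yij := by rw [hYiXi, Matrix.one_mul]
        _ = Yi * (Xi * Yij) := by rw [Matrix.mul_assoc]
        _ = 0 := by rw [hXYij, Matrix.mul_zero]
    have := congrFun (congrFun this a) b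
    simpa [hYij] using this
end
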